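/- Let H be the 3×3 matrix with rows (1,0,0), (1,2,0), (1,1,1), and consider the deterministic interference channel with noiseless integer inputs: ȳᵢ(t) = Σ_{j=1}^3 h_{ji} x̄ⱼ(t), x̄ⱼ(t) ∈ ℤ, (1/n)Σ_t x̄ⱼ(t)² ≤ P. Then its degrees-of-freedom, defined as limsup_{P→∞} [max_{R ∈ C_D(H,P·𝟏)} (R₁+R₂+R₃)]/((1/2)log₂ P), is at least (2 + log₂ 3)/3. -/

import Mathlib

open MeasureTheory ProbabilityTheory Filter

namespace GIFC

/-- Number of messages of a user with rate `R` at blocklength `n`: `2^⌈nR⌉`. -/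
noncomputable def nMsg (n : ℕ) (R : ℝ) : ℕ := 2 ^ (⌈(n : ℝ) * R⌉.toNat)

/-- A blocklength-`n` coding scheme for a `K`-user interference channel with
rate tuple `R`: encoders mapping messages to real codewords, and decoders
mapping received real signals to messages. -/
structure Scheme (K n : ℕ) (R : Fin K → ℝ) where
  enc : (i : Fin K) → Fin (nMsg n (R i)) → Fin n → ℝ
  dec : (i : Fin K) → (Fin n → ℝ) → Fin (nMsg n (R i))

/-- The per-codeword average power constraints `∑_t x_{i,t}² ≤ n Pᵢ`. -/
def Scheme.PowerOK {K n : ℕ} {R : Fin K → ℝ} (s : Scheme K n R) (P : Fin K → ℝ) : Prop :=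
  ∀ i w, ∑ t, (s.enc i w t) ^ 2 ≤ n * P i

/-- The joint law of the additive Gaussian noises `z_{j,t}`, i.i.d. over time with
variance `σsq j` at receiver `j`. -/
noncomputable def noiseMeasure (K n : ℕ) (σsq : Fin K → ℝ) :
    Measure (Fin K → Fin n → ℝ) :=
  Measure.pi fun j => Measure.pi fun _ => gaussianReal 0 (σsq j).toNNReal

/-- Average probability that receiver `i` decodes wrongly: the messages are
uniform and independent, receiver `i` observes `y_{i,t} = ∑_j h_{j i} x_{j,t} + z_{i,t}`. -/
noncomputable def Scheme.errProb {K n : ℕ} {R : Fin K → ℝ} (s : Scheme K n R)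
    (H : Matrix (Fin K) (Fin K) ℝ) (σsq : Fin K → ℝ) (i : Fin K) : ℝ :=
  (∑ w : (j : Fin K) → Fin (nMsg n (R j)),
      (noiseMeasure K n σsq
        {z | s.dec i (fun t => (∑ j, H j i * s.enc j (w j) t) + z i t) ≠ w i}).toReal) /
    (∏ j, (nMsg n (R j) : ℝ))

/-- The capacity region `C(H, σ², P)` of the `K`-user Gaussian interference channel:
rate tuples for which some sequence of power-constrained schemes has (maximal)
error probability tending to `0` with the blocklength. -/
def capacityRegion (K : ℕ) (H : Matrix (Fin K) (Fin K) ℝ) (σsq P : Fin K → ℝ) :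
    Set (Fin K → ℝ) :=
  {R | ∃ s : (n : ℕ) → Scheme K n R,
        (∀ n, (s n).PowerOK P) ∧
        ∀ i, Tendsto (fun n => (s n).errProb H σsq i) atTop (nhds 0)}

/-- The degrees-of-freedom of the gain matrix `H`:
`limsup_{P→∞} (max_{R ∈ C(H,1,P·1)} ∑ᵢ Rᵢ) / ((1/2) log₂ P)`. -/
noncomputable def DoF (K : ℕ) (H : Matrix (Fin K) (Fin K) ℝ) : ℝ :=
  limsup (fun P : ℝ =>
      sSup {x | ∃ R ∈ capacityRegion K H (fun _ => 1) (fun _ => P), x = ∑ i, R i} /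
        ((1 / 2) * Real.logb 2 P)) atTop

/-- `H` is fully connected if all its entries are nonzero. -/
def FullyConnected {K : ℕ} (H : Matrix (Fin K) (Fin K) ℝ) : Prop := ∀ i j, H i j ≠ 0


/-- A blocklength-`n` coding scheme for the deterministic `K`-user interference
channel: codewords are integer valued, received signals are noiseless reals. -/
structure DetScheme (K n : ℕ) (R : Fin K → ℝ) where
  enc : (i : Fin K) → Fin (nMsg n (R i)) → Fin n → ℤ
  dec : (i : Fin K) → (Fin n → ℝ) → Fin (nMsg n (R i))

/-- The average power constraints `(1/n) ∑_t x̄_{i,t}² ≤ Pᵢ`. -/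
def DetScheme.PowerOK {K n : ℕ} {R : Fin K → ℝ} (s : DetScheme K n R) (P : Fin K → ℝ) :
    Prop :=
  ∀ i w, ∑ t, ((s.enc i w t : ℝ)) ^ 2 ≤ n * P i

/-- Average error probability of receiver `i` in the deterministic channel with
noiseless outputs `ȳ_{i,t} = ∑_j h_{j i} x̄_{j,t}`: the fraction of (uniform,
independent) message tuples that are decoded incorrectly. -/
noncomputable def DetScheme.errProb {K n : ℕ} {R : Fin K → ℝ} (s : DetScheme K n R)
    (H : Matrix (Fin K) (Fin K) ℝ) (i : Fin K) : ℝ :=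
  ((Finset.univ.filter fun w : (j : Fin K) → Fin (nMsg n (R j)) =>
      s.dec i (fun t => ∑ j, H j i * (s.enc j (w j) t : ℝ)) ≠ w i).card : ℝ) /
    (∏ j, (nMsg n (R j) : ℝ))

/-- The capacity region `C_D(H, P)` of the deterministic integer-input
interference channel associated with `H`. -/
def detCapacityRegion (K : ℕ) (H : Matrix (Fin K) (Fin K) ℝ) (P : Fin K → ℝ) :
    Set (Fin K → ℝ) :=
  {R | ∃ s : (n : ℕ) → DetScheme K n R,
        (∀ n, (s n).PowerOK P) ∧
        ∀ i, Tendsto (fun n => (s n).errProb H i) atTop (nhds 0)}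

/-- The degrees-of-freedom of the deterministic integer-input interference channel. -/
noncomputable def detDoF (K : ℕ) (H : Matrix (Fin K) (Fin K) ℝ) : ℝ :=
  limsup (fun P : ℝ =>
      sSup {x | ∃ R ∈ detCapacityRegion K H (fun _ => P), x = ∑ i, R i} /
        ((1 / 2) * Real.logb 2 P)) atTop

/-!
Achievability: at power `P = 64 ^ L` every channel symbol is an `L`-digit number in base 8,
and on each of these levels user `j` sends one digit from `A₁ = {0,1}`, `A₂ = {0,2,4}`,
`A₃ = {0,2}`. With digits `a ∈ A₁`, `b ∈ A₂`, `c ∈ A₃` on a level, receiver 1 sees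
`a + b + c ≤ 7`, receiver 2 sees `2 b + c`, twice the base-8 digit `b + c / 2 ≤ 5`, and
receiver 3 sees `c`; so no carries occur and every receiver reads off its own digits. This
achieves the rates `(L, L log₂ 3 - δ, L)` with zero error, a sum rate of `L (2 + log₂ 3) - δ`
against `½ log₂ P = 3 L`.

Since `limsup` in `ℝ` is only meaningful for a sequence bounded above, we also need the
converse bound `Rᵢ ≤ log₂ (12 (P + 1))`: a receiver cannot distinguish more messages than the
transmitter has distinct codewords, and there are at most `(6 (P + 1)) ^ n` integer codewords of
average power `P`.
-/

open Finset

lemma nMsg_pos (n : ℕ) (R : ℝ) : 0 < nMsg n R := Nat.two_pow_pos _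

lemma rpow_le_nMsg (n : ℕ) (R : ℝ) : (2 : ℝ) ^ (n * R) ≤ nMsg n R :=
  calc (2 : ℝ) ^ (n * R) ≤ 2 ^ ((⌈n * R⌉.toNat : ℕ) : ℝ) :=
        Real.rpow_le_rpow_of_exponent_le one_le_two
          ((Int.le_ceil _).trans (mod_cast Int.self_le_toNat _))
    _ = nMsg n R := by rw [Real.rpow_natCast, nMsg, Nat.cast_pow, Nat.cast_ofNat]

lemma nMsg_le_pow {n N : ℕ} {R : ℝ} (hN : 0 < N) (h : (⌈n * R⌉ : ℝ) ≤ n * Real.logb 2 N) :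
    nMsg n R ≤ N ^ n := by
  have hexp : ((⌈n * R⌉.toNat : ℕ) : ℝ) ≤ n * Real.logb 2 N := by
    rcases le_total ⌈n * R⌉ 0 with hc | hc
    · have : (1 : ℝ) ≤ N := mod_cast hN
      rw [Int.toNat_of_nonpos hc, Nat.cast_zero]
      exact mul_nonneg n.cast_nonneg (Real.logb_nonneg one_lt_two this)
    · rwa [← Int.cast_natCast, Int.toNat_of_nonneg hc]
  have hNpos : (0 : ℝ) < N := mod_cast hN
  suffices (nMsg n R : ℝ) ≤ (N : ℝ) ^ n by exact_mod_cast this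
  calc (nMsg n R : ℝ) = (2 : ℝ) ^ ((⌈n * R⌉.toNat : ℕ) : ℝ) := by
        rw [Real.rpow_natCast, nMsg, Nat.cast_pow, Nat.cast_ofNat]
    _ ≤ 2 ^ (n * Real.logb 2 N) := Real.rpow_le_rpow_of_exponent_le one_le_two hexp
    _ = (N : ℝ) ^ n := by
        rw [mul_comm, Real.rpow_mul zero_le_two, Real.rpow_logb two_pos (by norm_num) hNpos,
          Real.rpow_natCast]

namespace DetScheme

variable {K n : ℕ} {R : Fin K → ℝ}

noncomputable def ofEncoders (H : Matrix (Fin K) (Fin K) ℝ)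
    (enc : (i : Fin K) → Fin (nMsg n (R i)) → Fin n → ℤ) : DetScheme K n R where
  enc := enc
  dec i y :=
    if h : ∃ w : (j : Fin K) → Fin (nMsg n (R j)), (fun t => ∑ j, H j i * (enc j (w j) t : ℝ)) = y
    then h.choose i else ⟨0, nMsg_pos _ _⟩

theorem errProb_ofEncoders_eq_zero {H : Matrix (Fin K) (Fin K) ℝ}
    {enc : (i : Fin K) → Fin (nMsg n (R i)) → Fin n → ℤ} {i : Fin K}
    (hdec : ∀ w w' : (j : Fin K) → Fin (nMsg n (R j)),
      (fun t => ∑ j, H j i * (enc j (w j) t : ℝ)) = (fun t => ∑ j, H j i * (enc j (w' j) t : ℝ)) →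
        w i = w' i) :
    (ofEncoders H enc).errProb H i = 0 := by
  have hcorrect (w : (j : Fin K) → Fin (nMsg n (R j))) :
      (ofEncoders H enc).dec i (fun t => ∑ j, H j i * ((ofEncoders H enc).enc j (w j) t : ℝ)) =
        w i := by
    have hex : ∃ w' : (j : Fin K) → Fin (nMsg n (R j)),
        (fun t => ∑ j, H j i * (enc j (w' j) t : ℝ)) = fun t => ∑ j, H j i * (enc j (w j) t : ℝ) :=
      ⟨w, rfl⟩
    simp only [ofEncoders, dif_pos hex]
    exact hdec _ _ hex.choose_spec
  rw [errProb, filter_eq_empty_iff.mpr fun w _ => not_not.mpr (hcorrect w)]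
  simp

end DetScheme

/-- On a correctly decoded tuple `w`, the message `w i` is recovered from the codeword
`s.enc i (w i)` and the other messages. -/
lemma DetScheme.card_filter_dec_eq_le {K n : ℕ} {R : Fin K → ℝ} (s : DetScheme K n R)
    (H : Matrix (Fin K) (Fin K) ℝ) (i : Fin K) :
    (univ.filter fun w : (j : Fin K) → Fin (nMsg n (R j)) =>
        s.dec i (fun t => ∑ j, H j i * (s.enc j (w j) t : ℝ)) = w i).card ≤
      (univ.image (s.enc i)).card * Fintype.card ((j : {j // j ≠ i}) → Fin (nMsg n (R j))) := by
  classical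
  rw [← card_univ (α := (j : {j // j ≠ i}) → Fin (nMsg n (R j))), ← card_product]
  refine card_le_card_of_injOn (fun w => (s.enc i (w i), fun j => w j))
    (fun w _ => by simp) fun w hw w' hw' heq => ?_
  rw [mem_coe, mem_filter] at hw hw'
  obtain ⟨henc, hrest⟩ := Prod.ext_iff.mp heq
  have hothers (j : Fin K) (hj : j ≠ i) : w j = w' j := congrFun hrest ⟨j, hj⟩
  have hsame : (fun t => ∑ j, H j i * (s.enc j (w j) t : ℝ)) =
      fun t => ∑ j, H j i * (s.enc j (w' j) t : ℝ) := by
    funext t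
    refine sum_congr rfl fun j _ => ?_
    by_cases hj : j = i
    · subst hj; rw [show s.enc j (w j) = s.enc j (w' j) from henc]
    · rw [hothers j hj]
  funext j
  by_cases hj : j = i
  · subst hj; rw [← hw.2, ← hw'.2, hsame]
  · exact hothers j hj

lemma DetScheme.one_sub_errProb_le {K n : ℕ} {R : Fin K → ℝ} (s : DetScheme K n R)
    (H : Matrix (Fin K) (Fin K) ℝ) (i : Fin K) :
    1 - s.errProb H i ≤ ((univ.image (s.enc i)).card : ℝ) / nMsg n (R i) := by
  classical
  set C := Fintype.card ((j : {j // j ≠ i}) → Fin (nMsg n (R j)))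
  have hC : (0 : ℝ) < C := mod_cast Fintype.card_pos_iff.mpr ⟨fun j => ⟨0, nMsg_pos _ _⟩⟩
  have hN : ∏ j, (nMsg n (R j) : ℝ) = nMsg n (R i) * C := by
    have h := Fintype.card_congr (Equiv.piSplitAt i fun j => Fin (nMsg n (R j)))
    rw [Fintype.card_prod, Fintype.card_fin, Fintype.card_pi] at h
    simp only [Fintype.card_fin] at h
    exact_mod_cast h
  have hNpos : (0 : ℝ) < ∏ j, (nMsg n (R j) : ℝ) := by
    rw [hN]; exact mul_pos (mod_cast nMsg_pos n (R i)) hC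
  have hsplit := congrArg (Nat.cast (R := ℝ)) (card_filter_add_card_filter_not (s := univ)
    fun w : (j : Fin K) → Fin (nMsg n (R j)) =>
      s.dec i (fun t => ∑ j, H j i * (s.enc j (w j) t : ℝ)) = w i)
  simp only [card_univ, Fintype.card_pi, Fintype.card_fin, Nat.cast_add, Nat.cast_prod] at hsplit
  calc 1 - s.errProb H i = (univ.filter fun w : (j : Fin K) → Fin (nMsg n (R j)) =>
        s.dec i (fun t => ∑ j, H j i * (s.enc j (w j) t : ℝ)) = w i).card /
          ∏ j, (nMsg n (R j) : ℝ) := by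
        rw [errProb, eq_div_iff hNpos.ne', sub_mul, div_mul_cancel₀ _ hNpos.ne']
        simp only [ne_eq]
        linarith
    _ ≤ ((univ.image (s.enc i)).card * C : ℕ) / (nMsg n (R i) * C) := by
        rw [hN]
        gcongr
        exact s.card_filter_dec_eq_le H i
    _ = ((univ.image (s.enc i)).card : ℝ) / nMsg n (R i) := by
        push_cast
        exact mul_div_mul_right _ _ hC.ne'

lemma hasSum_pow_natAbs {q : ℝ} (hq0 : 0 ≤ q) (hq1 : q < 1) :
    HasSum (fun k : ℤ => q ^ k.natAbs) ((1 + q) / (1 - q)) := by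
  have hpos := hasSum_geometric_of_lt_one hq0 hq1
  have hneg : HasSum (fun m : ℕ => q ^ (-((m : ℤ) + 1)).natAbs) (q * (1 - q)⁻¹) := by
    have hfun : (fun m : ℕ => q ^ (-((m : ℤ) + 1)).natAbs) = fun m => q * q ^ m :=
      funext fun m => by rw [← pow_succ']; congr 1
    rw [hfun]
    exact hpos.mul_left q
  rw [div_eq_mul_inv, add_mul, one_mul]
  exact HasSum.of_nat_of_neg_add_one (f := fun k : ℤ => q ^ k.natAbs) (by simpa using hpos) hneg

lemma sum_prod_le_tsum_pow {ι α : Type*} [Fintype ι] (A : Finset (ι → α)) {w : α → ℝ}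
    (hw : ∀ a, 0 ≤ w a) (hs : Summable w) :
    ∑ c ∈ A, ∏ t, w (c t) ≤ (∑' a, w a) ^ Fintype.card ι := by
  classical
  set V := A.biUnion fun c => univ.image c
  have hsub : A ⊆ Fintype.piFinset fun _ => V := fun c hc =>
    Fintype.mem_piFinset.mpr fun t => mem_biUnion.mpr ⟨c, hc, mem_image_of_mem c (mem_univ t)⟩
  calc ∑ c ∈ A, ∏ t, w (c t) ≤ ∑ c ∈ Fintype.piFinset (fun _ => V), ∏ t, w (c t) :=
        sum_le_sum_of_subset_of_nonneg hsub fun c _ _ => prod_nonneg fun t _ => hw _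
    _ = (∑ a ∈ V, w a) ^ Fintype.card ι := by rw [← prod_univ_sum, prod_const, card_univ]
    _ ≤ (∑' a, w a) ^ Fintype.card ι :=
        pow_le_pow_left₀ (sum_nonneg fun a _ => hw a) (hs.sum_le_tsum V fun a _ => hw a) _

lemma exp_neg_inv_le {P : ℝ} (hP : 0 < P) : Real.exp (-P⁻¹) ≤ P / (P + 1) := by
  rw [Real.exp_neg, ← inv_div]
  refine inv_anti₀ (by positivity) ?_
  calc (P + 1) / P = P⁻¹ + 1 := by field_simp; ring
    _ ≤ Real.exp P⁻¹ := Real.add_one_le_exp _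

/-- With `q = exp (-1 / P)`, each codeword has weight `∏ₜ q ^ |c t| ≥ exp (-1) ^ n` because
`|k| ≤ k ^ 2` on `ℤ`, while all of `ℤⁿ` has weight `((1 + q) / (1 - q)) ^ n ≤ (2 (P + 1)) ^ n`. -/
lemma card_le_of_sum_sq_le {n : ℕ} {P : ℝ} (hP : 0 < P) (A : Finset (Fin n → ℤ))
    (hA : ∀ c ∈ A, ∑ t, (c t : ℝ) ^ 2 ≤ n * P) : (A.card : ℝ) ≤ (6 * (P + 1)) ^ n := by
  set q := Real.exp (-P⁻¹)
  have hq1 : q < 1 := Real.exp_lt_one_iff.mpr (neg_lt_zero.mpr (inv_pos.mpr hP))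
  have hgeom : (1 + q) / (1 - q) ≤ 2 * (P + 1) := by
    have hqP := exp_neg_inv_le hP
    rw [div_le_iff₀ (by linarith)]
    rw [le_div_iff₀ (by linarith)] at hqP
    nlinarith
  have hweight (c : Fin n → ℤ) (hc : c ∈ A) : Real.exp (-1) ^ n ≤ ∏ t, q ^ (c t).natAbs := by
    have habs : ((∑ t, (c t).natAbs : ℕ) : ℝ) ≤ n * P :=
      calc ((∑ t, (c t).natAbs : ℕ) : ℝ) ≤ ∑ t, (c t : ℝ) ^ 2 := by
            push_cast
            simp only [Nat.cast_natAbs, Int.cast_abs]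
            exact sum_le_sum fun t _ => mod_cast Int.natAbs_le_self_sq (c t)
        _ ≤ n * P := hA c hc
    rw [prod_pow_eq_pow_sum, ← Real.exp_nat_mul, ← Real.exp_nat_mul, Real.exp_le_exp]
    rw [mul_neg_one, mul_neg, neg_le_neg_iff, ← div_eq_mul_inv, div_le_iff₀ hP]
    exact habs
  have hhs := hasSum_pow_natAbs (Real.exp_pos _).le hq1
  have hcount : (A.card : ℝ) * Real.exp (-1) ^ n ≤ (2 * (P + 1)) ^ n :=
    calc (A.card : ℝ) * Real.exp (-1) ^ n = ∑ _c ∈ A, Real.exp (-1) ^ n := by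
          rw [sum_const, nsmul_eq_mul]
      _ ≤ ∑ c ∈ A, ∏ t, q ^ (c t).natAbs := sum_le_sum hweight
      _ ≤ ((1 + q) / (1 - q)) ^ n := by
          simpa [hhs.tsum_eq] using sum_prod_le_tsum_pow A (fun k => by positivity) hhs.summable
      _ ≤ (2 * (P + 1)) ^ n := pow_le_pow_left₀ (div_nonneg (by positivity) (by linarith)) hgeom n
  calc (A.card : ℝ) = A.card * Real.exp (-1) ^ n * Real.exp 1 ^ n := by
        rw [mul_assoc, ← mul_pow, ← Real.exp_add]; simp
    _ ≤ (2 * (P + 1)) ^ n * Real.exp 1 ^ n := by gcongr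
    _ = (2 * Real.exp 1 * (P + 1)) ^ n := by rw [← mul_pow]; ring_nf
    _ ≤ (6 * (P + 1)) ^ n := by
        gcongr
        linarith [Real.exp_one_lt_d9]

lemma rate_le_of_mem_detCapacityRegion {K : ℕ} {H : Matrix (Fin K) (Fin K) ℝ} {P : ℝ}
    (hP : 0 < P) {R : Fin K → ℝ} (hR : R ∈ detCapacityRegion K H fun _ => P) (i : Fin K) :
    R i ≤ Real.logb 2 (12 * (P + 1)) := by
  obtain ⟨s, hpower, herr⟩ := hR
  obtain ⟨n, hsmall, hn⟩ :=
    (((herr i).eventually (gt_mem_nhds one_half_pos)).and (eventually_ge_atTop 1)).exists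
  have hA : ((univ.image ((s n).enc i)).card : ℝ) ≤ (6 * (P + 1)) ^ n :=
    card_le_of_sum_sq_le hP _ fun c hc => by
      obtain ⟨w, -, rfl⟩ := mem_image.mp hc
      exact hpower n i w
  have hM : (nMsg n (R i) : ℝ) < 2 * (6 * (P + 1)) ^ n := by
    have h := (s n).one_sub_errProb_le H i
    have hMpos : (0 : ℝ) < nMsg n (R i) := mod_cast nMsg_pos n (R i)
    rw [le_div_iff₀ hMpos] at h
    nlinarith
  have hsq : 2 * (6 * (P + 1)) ^ n ≤ (12 * (P + 1)) ^ n :=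
    calc 2 * (6 * (P + 1)) ^ n ≤ 2 ^ n * (6 * (P + 1)) ^ n :=
          mul_le_mul_of_nonneg_right (le_self_pow₀ one_le_two (by omega)) (by positivity)
      _ = (12 * (P + 1)) ^ n := by rw [← mul_pow]; ring
  have hlt := ((rpow_le_nMsg n (R i)).trans_lt hM).trans_le hsq
  have h12 : (0 : ℝ) < 12 * (P + 1) := by positivity
  rw [← Real.rpow_natCast, ← Real.rpow_logb two_pos (by norm_num) h12,
    ← Real.rpow_mul zero_le_two, Real.rpow_lt_rpow_left_iff one_lt_two, mul_comm (n : ℝ)] at hlt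
  exact (lt_of_mul_lt_mul_right hlt n.cast_nonneg).le

noncomputable def detSumCapacity (K : ℕ) (H : Matrix (Fin K) (Fin K) ℝ) (P : ℝ) : ℝ :=
  sSup {x | ∃ R ∈ detCapacityRegion K H (fun _ => P), x = ∑ i, R i}

lemma sum_le_of_mem_detCapacityRegion {K : ℕ} {H : Matrix (Fin K) (Fin K) ℝ} {P : ℝ}
    (hP : 0 < P) {R : Fin K → ℝ} (hR : R ∈ detCapacityRegion K H fun _ => P) :
    ∑ i, R i ≤ K * Real.logb 2 (12 * (P + 1)) := by
  simpa using sum_le_sum fun i (_ : i ∈ univ) => rate_le_of_mem_detCapacityRegion hP hR i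

lemma detSumCapacity_le {K : ℕ} (H : Matrix (Fin K) (Fin K) ℝ) {P : ℝ} (hP : 0 < P) :
    detSumCapacity K H P ≤ K * Real.logb 2 (12 * (P + 1)) :=
  Real.sSup_le (by rintro _ ⟨R, hR, rfl⟩; exact sum_le_of_mem_detCapacityRegion hP hR)
    (mul_nonneg K.cast_nonneg (Real.logb_nonneg one_lt_two (by linarith)))

lemma le_detSumCapacity {K : ℕ} {H : Matrix (Fin K) (Fin K) ℝ} {P : ℝ} (hP : 0 < P)
    {R : Fin K → ℝ} (hR : R ∈ detCapacityRegion K H fun _ => P) :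
    ∑ i, R i ≤ detSumCapacity K H P :=
  le_csSup ⟨_, by rintro _ ⟨R', hR', rfl⟩; exact sum_le_of_mem_detCapacityRegion hP hR'⟩
    ⟨R, hR, rfl⟩

lemma isBoundedUnder_detSumCapacity_div (K : ℕ) (H : Matrix (Fin K) (Fin K) ℝ) :
    IsBoundedUnder (· ≤ ·) atTop
      fun P => detSumCapacity K H P / (1 / 2 * Real.logb 2 P) := by
  refine isBoundedUnder_of_eventually_le (a := 4 * K) ?_
  filter_upwards [eventually_ge_atTop 13] with P hP
  have hlog : 0 < Real.logb 2 P := Real.logb_pos one_lt_two (by linarith)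
  have hsq : Real.logb 2 (12 * (P + 1)) ≤ 2 * Real.logb 2 P := by
    rw [show 2 * Real.logb 2 P = Real.logb 2 (P ^ 2) by rw [Real.logb_pow]; norm_num]
    exact Real.logb_le_logb_of_le one_lt_two (by positivity) (by nlinarith)
  rw [div_le_iff₀ (by positivity)]
  calc detSumCapacity K H P ≤ K * Real.logb 2 (12 * (P + 1)) := detSumCapacity_le H (by linarith)
    _ ≤ K * (2 * Real.logb 2 P) := by gcongr
    _ = 4 * K * (1 / 2 * Real.logb 2 P) := by ring

lemma eq_of_sum_mul_pow_eq {b L : ℕ} {d d' : Fin L → ℕ} (hd : ∀ l, d l < b) (hd' : ∀ l, d' l < b)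
    (h : ∑ l, d l * b ^ (l : ℕ) = ∑ l, d' l * b ^ (l : ℕ)) : d = d' := by
  have := (finFunctionFinEquiv (m := b) (n := L)).injective
    (a₁ := fun l => ⟨d l, hd l⟩) (a₂ := fun l => ⟨d' l, hd' l⟩) (Fin.ext h)
  funext l
  exact congrArg Fin.val (congrFun this l)

/-- Reducing modulo `N ^ n` keeps the encoder defined at every blocklength, also where the rate
is too high for the message to fit into `n` symbols. -/
def messageSymbols {M N : ℕ} (n : ℕ) (hN : 0 < N) (w : Fin M) : Fin n → Fin N :=
  finFunctionFinEquiv.symm ⟨w % N ^ n, Nat.mod_lt _ (pow_pos hN n)⟩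

lemma messageSymbols_injective {M N n : ℕ} (hN : 0 < N) (hM : M ≤ N ^ n) :
    Function.Injective (messageSymbols n hN : Fin M → Fin n → Fin N) := fun w w' h => by
  have := congrArg Fin.val (finFunctionFinEquiv.symm.injective h)
  simp only [Nat.mod_eq_of_lt (w.isLt.trans_le hM), Nat.mod_eq_of_lt (w'.isLt.trans_le hM)] at this
  exact Fin.ext this

def exampleGain : Matrix (Fin 3) (Fin 3) ℝ := !![1, 0, 0; 1, 2, 0; 1, 1, 1]

/-- User `j` sends on each base-8 level a digit `d < levelBase j` as `levelScale j * d`. -/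
def levelBase : Fin 3 → ℕ
  | 0 => 2
  | 1 => 3
  | 2 => 2

def levelScale : Fin 3 → ℕ
  | 0 => 1
  | 1 => 2
  | 2 => 2

lemma levelBase_pos (j : Fin 3) : 0 < levelBase j := by
  fin_cases j <;> simp [levelBase]

lemma levelScale_mul_lt (j : Fin 3) (d : Fin (levelBase j)) : levelScale j * d < 8 := by
  have := d.isLt
  fin_cases j <;>
    simp only [Fin.zero_eta, Fin.mk_one, Fin.reduceFinMk, Fin.isValue, levelBase, levelScale]
      at this ⊢ <;> omega

def levelDigit {L : ℕ} {j : Fin 3} (u : Fin (levelBase j ^ L)) (l : Fin L) : ℕ :=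
  finFunctionFinEquiv.symm u l

lemma levelDigit_lt {L : ℕ} {j : Fin 3} (u : Fin (levelBase j ^ L)) (l : Fin L) :
    levelDigit u l < levelBase j :=
  (finFunctionFinEquiv.symm u l).isLt

lemma levelDigit_injective {L : ℕ} {j : Fin 3} :
    Function.Injective (levelDigit : Fin (levelBase j ^ L) → Fin L → ℕ) := fun _ _ h =>
  finFunctionFinEquiv.symm.injective <| funext fun l => Fin.ext (congrFun h l)

def levelSymbol (L : ℕ) (j : Fin 3) (u : Fin (levelBase j ^ L)) : ℕ :=
  ∑ l, levelScale j * levelDigit u l * 8 ^ (l : ℕ)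

lemma levelSymbol_lt (L : ℕ) (j : Fin 3) (u : Fin (levelBase j ^ L)) :
    levelSymbol L j u < 8 ^ L :=
  (finFunctionFinEquiv fun l => ⟨_, levelScale_mul_lt j (finFunctionFinEquiv.symm u l)⟩).isLt

section
variable {L : ℕ} {u u' : (j : Fin 3) → Fin (levelBase j ^ L)}

lemma levelSymbol_decode_zero (h : levelSymbol L 0 (u 0) + levelSymbol L 1 (u 1) +
    levelSymbol L 2 (u 2) = levelSymbol L 0 (u' 0) + levelSymbol L 1 (u' 1) +
    levelSymbol L 2 (u' 2)) : u 0 = u' 0 := by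
  simp only [levelSymbol, levelScale, one_mul, ← sum_add_distrib, ← add_mul] at h
  have hlt (v : (j : Fin 3) → Fin (levelBase j ^ L)) (l : Fin L) :
      levelDigit (v 0) l + 2 * levelDigit (v 1) l + 2 * levelDigit (v 2) l < 8 := by
    have := levelDigit_lt (v 0) l; have := levelDigit_lt (v 1) l; have := levelDigit_lt (v 2) l
    simp only [levelBase] at *
    omega
  refine levelDigit_injective (funext fun l => ?_)
  have := congrFun (eq_of_sum_mul_pow_eq (hlt u) (hlt u') h) l
  have := levelDigit_lt (u 0) l; have := levelDigit_lt (u' 0) l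
  simp only [levelBase] at *
  omega

lemma levelSymbol_decode_one (h : 2 * levelSymbol L 1 (u 1) + levelSymbol L 2 (u 2) =
    2 * levelSymbol L 1 (u' 1) + levelSymbol L 2 (u' 2)) : u 1 = u' 1 := by
  simp only [levelSymbol, levelScale, mul_sum, ← sum_add_distrib] at h
  have h' : ∑ l, (2 * levelDigit (u 1) l + levelDigit (u 2) l) * 8 ^ (l : ℕ) =
      ∑ l, (2 * levelDigit (u' 1) l + levelDigit (u' 2) l) * 8 ^ (l : ℕ) := by
    refine Nat.eq_of_mul_eq_mul_left two_pos ?_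
    rw [mul_sum, mul_sum]
    convert h using 2 <;> ring
  have hlt (v : (j : Fin 3) → Fin (levelBase j ^ L)) (l : Fin L) :
      2 * levelDigit (v 1) l + levelDigit (v 2) l < 8 := by
    have := levelDigit_lt (v 1) l; have := levelDigit_lt (v 2) l
    simp only [levelBase] at *
    omega
  refine levelDigit_injective (funext fun l => ?_)
  have := congrFun (eq_of_sum_mul_pow_eq (hlt u) (hlt u') h') l
  have := levelDigit_lt (u 2) l; have := levelDigit_lt (u' 2) l
  simp only [levelBase] at *
  omega

lemma levelSymbol_decode_two (h : levelSymbol L 2 (u 2) = levelSymbol L 2 (u' 2)) :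
    u 2 = u' 2 := by
  simp only [levelSymbol, levelScale] at h
  have hlt (v : (j : Fin 3) → Fin (levelBase j ^ L)) (l : Fin L) : 2 * levelDigit (v 2) l < 8 := by
    have := levelDigit_lt (v 2) l
    simp only [levelBase] at this
    omega
  refine levelDigit_injective (funext fun l => ?_)
  have := congrFun (eq_of_sum_mul_pow_eq (hlt u) (hlt u') h) l
  omega

end

lemma levelSymbol_decode {L : ℕ} {u u' : (j : Fin 3) → Fin (levelBase j ^ L)} (i : Fin 3)
    (h : ∑ j, exampleGain j i * (levelSymbol L j (u j) : ℝ) =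
      ∑ j, exampleGain j i * (levelSymbol L j (u' j) : ℝ)) : u i = u' i := by
  fin_cases i <;>
    simp only [exampleGain, Fin.zero_eta, Fin.mk_one, Fin.reduceFinMk, Fin.isValue,
      Matrix.of_apply, Matrix.cons_val', Matrix.cons_val_zero, Matrix.cons_val_one, Matrix.cons_val,
      Matrix.cons_val_fin_one, Fin.sum_univ_three, zero_mul, zero_add, add_zero, one_mul] at h
  · exact levelSymbol_decode_zero (by exact_mod_cast h)
  · exact levelSymbol_decode_one (by exact_mod_cast h)
  · exact levelSymbol_decode_two (by exact_mod_cast h)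

noncomputable def levelScheme (L n : ℕ) (R : Fin 3 → ℝ) : DetScheme 3 n R :=
  DetScheme.ofEncoders exampleGain fun j w t =>
    levelSymbol L j (messageSymbols n (pow_pos (levelBase_pos j) L) w t)

lemma errProb_levelScheme_eq_zero {L n : ℕ} {R : Fin 3 → ℝ} {i : Fin 3}
    (hi : nMsg n (R i) ≤ (levelBase i ^ L) ^ n) : (levelScheme L n R).errProb exampleGain i = 0 :=
  DetScheme.errProb_ofEncoders_eq_zero fun _ _ h =>
    messageSymbols_injective _ hi <| funext fun t =>
      levelSymbol_decode i (by simpa using congrFun h t)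

lemma levelScheme_powerOK (L n : ℕ) (R : Fin 3 → ℝ) :
    (levelScheme L n R).PowerOK fun _ => 64 ^ L := by
  intro j w
  calc ∑ t, ((levelScheme L n R).enc j w t : ℝ) ^ 2 ≤ ∑ _t : Fin n, (64 : ℝ) ^ L := by
        refine sum_le_sum fun t _ => ?_
        have hlt : (levelSymbol L j (messageSymbols n (pow_pos (levelBase_pos j) L) w t) : ℝ) <
            8 ^ L := mod_cast levelSymbol_lt L j _
        rw [show (64 : ℝ) ^ L = (8 ^ L) ^ 2 by rw [← pow_mul, mul_comm, pow_mul]; norm_num]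
        exact pow_le_pow_left₀ (by positivity) hlt.le 2
    _ = n * 64 ^ L := by simp

lemma mem_detCapacityRegion_of_eventually_le {L : ℕ} {R : Fin 3 → ℝ}
    (hR : ∀ i, ∀ᶠ n in atTop, nMsg n (R i) ≤ (levelBase i ^ L) ^ n) :
    R ∈ detCapacityRegion 3 exampleGain fun _ => 64 ^ L :=
  ⟨fun n => levelScheme L n R, fun n => levelScheme_powerOK L n R, fun i =>
    tendsto_const_nhds.congr' <| (hR i).mono fun _ hn => (errProb_levelScheme_eq_zero hn).symm⟩

/-- The middle rate sits `δ` below `L log₂ 3` so that `2 ^ ⌈n R⌉ ≤ 3 ^ (L n)` for `n ≥ 1 / δ`. -/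
noncomputable def exampleRates (L : ℕ) (δ : ℝ) : Fin 3 → ℝ := ![L, L * Real.logb 2 3 - δ, L]

lemma exampleRates_mem {L : ℕ} {δ : ℝ} (hδ : 0 < δ) :
    exampleRates L δ ∈ detCapacityRegion 3 exampleGain fun _ => 64 ^ L := by
  have hceil (n : ℕ) : (⌈(n : ℝ) * L⌉ : ℝ) = n * L := by
    exact_mod_cast congrArg (Int.cast (R := ℝ)) (Int.ceil_natCast (n * L))
  refine mem_detCapacityRegion_of_eventually_le fun i => ?_
  fin_cases i
  · refine Eventually.of_forall fun n => nMsg_le_pow (pow_pos (levelBase_pos 0) L) ?_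
    simp [exampleRates, hceil, levelBase, Real.logb_pow]
  · filter_upwards [eventually_ge_atTop ⌈δ⁻¹⌉₊] with n hn
    refine nMsg_le_pow (pow_pos (levelBase_pos 1) L) ?_
    have hnδ : 1 ≤ n * δ := by
      rw [← inv_mul_cancel₀ hδ.ne']
      exact mul_le_mul_of_nonneg_right ((Nat.le_ceil _).trans (mod_cast hn)) hδ.le
    have := Int.ceil_lt_add_one ((n : ℝ) * exampleRates L δ 1)
    simp only [exampleRates, levelBase, Matrix.cons_val_one, Matrix.cons_val_zero] at this ⊢
    push_cast
    rw [Real.logb_pow]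
    nlinarith
  · refine Eventually.of_forall fun n => nMsg_le_pow (pow_pos (levelBase_pos 2) L) ?_
    simp [exampleRates, hceil, levelBase, Real.logb_pow]

lemma sum_exampleRates (L : ℕ) (δ : ℝ) :
    ∑ i, exampleRates L δ i = L * (2 + Real.logb 2 3) - δ := by
  simp only [exampleRates, Fin.sum_univ_three, Fin.isValue, Matrix.cons_val_zero,
    Matrix.cons_val_one, Matrix.cons_val]
  ring

lemma le_detSumCapacity_example (L : ℕ) :
    L * (2 + Real.logb 2 3) ≤ detSumCapacity 3 exampleGain (64 ^ L) :=
  le_of_forall_pos_le_add fun δ hδ => by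
    linarith [sum_exampleRates L δ,
      le_detSumCapacity (by positivity) (exampleRates_mem (L := L) hδ)]

/-- Lower bound of Section 5: the deterministic integer-input interference channel
with gain matrix rows `(1,0,0), (1,2,0), (1,1,1)` has degrees-of-freedom at least
`(2 + log₂ 3)/3`. -/
theorem detDoF_example_lower_bound :
    (2 + Real.logb 2 3) / 3 ≤ detDoF 3 !![1, 0, 0; 1, 2, 0; 1, 1, 1] := by
  have hfreq : ∃ᶠ P in atTop, (2 + Real.logb 2 3) / 3 ≤
      detSumCapacity 3 exampleGain P / (1 / 2 * Real.logb 2 P) := by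
    refine (tendsto_pow_atTop_atTop_of_one_lt (by norm_num : (1 : ℝ) < 64)).frequently
      (Eventually.frequently ?_)
    filter_upwards [eventually_ge_atTop 1] with L hL
    have hlog : 1 / 2 * Real.logb 2 ((64 : ℝ) ^ L) = 3 * L := by
      rw [Real.logb_pow, show (64 : ℝ) = 2 ^ (6 : ℕ) by norm_num, Real.logb_pow,
        Real.logb_self_eq_one one_lt_two]
      push_cast; ring
    rw [hlog, le_div_iff₀ (by positivity)]
    linarith [le_detSumCapacity_example L]
  exact le_limsup_of_frequently_le hfreq (isBoundedUnder_detSumCapacity_div 3 _)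

end GIFC
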